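/- For every R > 0 and every θ ∈ ℝ, the pushforward of ρ by T_θ equals μ_θ, and T_θ minimizes the quadratic Monge cost: for every Borel map S : ℝ^d → ℝ^d whose pushforward of ρ equals μ_θ, one has ∫ |x − S(x)|² dρ(x) ≥ ∫ |x − T_θ(x)|² dρ(x). -/

import Mathlib

open MeasureTheory Metric
open scoped ENNReal

set_option maxHeartbeats 1000000 in
/-- For every `R > 0` and `θ ∈ ℝ`, the pushforward of `ρ` by `T_θ` equals
`μ_θ = ½(δ_{B_θ} + δ_{B_θ'})`, and `T_θ` minimizes the quadratic Monge cost among all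
transport maps from `ρ` to `μ_θ`. -/
theorem stmt7 (d : ℕ) (hd : 2 ≤ d)
    (A A' : EuclideanSpace ℝ (Fin d))
    (hA : A = EuclideanSpace.single (⟨0, by omega⟩ : Fin d) (1 : ℝ))
    (hA' : A' = EuclideanSpace.single (⟨0, by omega⟩ : Fin d) (-1 : ℝ))
    (E : Set (EuclideanSpace ℝ (Fin d))) (hE : E = {A, A'})
    (f : ℝ → ℝ)
    (hf : f = fun r => r ^ (-(d : ℝ)) * min 1 ((Real.log r) ^ 2)⁻¹)
    (c₀ : ℝ) (hc₀ : 0 < c₀)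
    (ρ : Measure (EuclideanSpace ℝ (Fin d)))
    (hρ : ρ = volume.withDensity
      ((closedBall (0 : EuclideanSpace ℝ (Fin d)) 1).indicator
        fun x => ENNReal.ofReal (c₀ * f (infDist x E))))
    (hprob : IsProbabilityMeasure ρ)
    (R : ℝ) (hR : 0 < R) (θ : ℝ)
    (Bθ : EuclideanSpace ℝ (Fin d))
    (hBθ : Bθ =
      EuclideanSpace.single (⟨0, by omega⟩ : Fin d) (R * Real.sin θ) +
      EuclideanSpace.single (⟨1, by omega⟩ : Fin d) (R * Real.cos θ))
    (μθ : Measure (EuclideanSpace ℝ (Fin d)))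
    (hμθ : μθ = (2 : ℝ≥0∞)⁻¹ • (Measure.dirac Bθ + Measure.dirac (-Bθ)))
    (T : EuclideanSpace ℝ (Fin d) → EuclideanSpace ℝ (Fin d))
    (hT : ∀ x, T x = if 0 < (inner ℝ x Bθ : ℝ) then Bθ else -Bθ) :
    ρ.map T = μθ ∧
    ∀ S : EuclideanSpace ℝ (Fin d) → EuclideanSpace ℝ (Fin d),
      Measurable S → ρ.map S = μθ →
      ∫⁻ x, ENNReal.ofReal (dist x (T x) ^ 2) ∂ρ ≤
        ∫⁻ x, ENNReal.ofReal (dist x (S x) ^ 2) ∂ρ := by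
  classical
  -- B_θ is nonzero
  have hB0 : Bθ ≠ 0 := by
    rw [hBθ]
    intro hB
    have h0 := congrArg (fun v : EuclideanSpace ℝ (Fin d) => v ⟨0, by omega⟩) hB
    have h1 := congrArg (fun v : EuclideanSpace ℝ (Fin d) => v ⟨1, by omega⟩) hB
    simp [EuclideanSpace.single_apply, Fin.mk.injEq] at h0 h1
    rcases h0 with h0 | h0
    · exact absurd h0 hR.ne'
    rcases h1 with h1 | h1
    · exact absurd h1 hR.ne'
    nlinarith [Real.sin_sq_add_cos_sq θ]
  set U : Set (EuclideanSpace ℝ (Fin d)) := {x | 0 < (inner ℝ x Bθ : ℝ)} with hUdef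
  have hinner : Continuous fun x : EuclideanSpace ℝ (Fin d) => (inner ℝ x Bθ : ℝ) :=
    continuous_id.inner continuous_const
  have hU : MeasurableSet U := measurableSet_lt measurable_const hinner.measurable
  have hTeq : T = U.piecewise (fun _ => Bθ) (fun _ => -Bθ) := by
    funext x
    rw [hT]
    by_cases h : x ∈ U
    · rw [Set.piecewise_eq_of_mem _ _ _ h]; exact if_pos h
    · rw [Set.piecewise_eq_of_notMem _ _ _ h]; exact if_neg h
  have hTmeas : Measurable T := by
    rw [hTeq]; exact Measurable.piecewise hU measurable_const measurable_const
  -- density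
  set g : EuclideanSpace ℝ (Fin d) → ℝ≥0∞ :=
    (closedBall (0 : EuclideanSpace ℝ (Fin d)) 1).indicator
      (fun x => ENNReal.ofReal (c₀ * f (infDist x E))) with hgdef
  have hfm : Measurable f := by
    rw [hf]
    exact (measurable_id.pow_const _).mul
      (measurable_const.min ((Real.measurable_log.pow_const 2).inv))
  have hgm : Measurable g :=
    (ENNReal.measurable_ofReal.comp
      (measurable_const.mul (hfm.comp (continuous_infDist_pt E).measurable))).indicator
      measurableSet_closedBall
  -- symmetry of the density under negation
  have hAA' : A' = -A := by
    rw [hA, hA']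
    ext j
    by_cases h : j = (⟨0, by omega⟩ : Fin d) <;> simp [EuclideanSpace.single_apply, h]
  have hEneg : (fun y : EuclideanSpace ℝ (Fin d) => -y) '' E = E := by
    rw [hE, hAA', Set.image_pair]; simp [Set.pair_comm]
  have hgsymm : ∀ x, g (-x) = g x := by
    intro x
    have hdist : infDist (-x) E = infDist x E := by
      conv_lhs => rw [← hEneg]
      exact infDist_image isometry_neg
    simp only [hgdef, Set.indicator, mem_closedBall, dist_zero_right, norm_neg, hdist]
  have hρac : ρ ≪ volume := by rw [hρ]; exact withDensity_absolutelyContinuous _ _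
  -- the separating hyperplane is null
  have hplane : ρ {x : EuclideanSpace ℝ (Fin d) | (inner ℝ x Bθ : ℝ) = 0} = 0 := by
    refine hρac ?_
    have hker : {x : EuclideanSpace ℝ (Fin d) | (inner ℝ x Bθ : ℝ) = 0}
        = (LinearMap.ker (innerSL ℝ Bθ).toLinearMap : Set _) := by
      ext x
      simp only [LinearMap.mem_ker, ContinuousLinearMap.coe_coe, innerSL_apply_apply, Set.mem_setOf_eq, SetLike.mem_coe]
      rw [real_inner_comm]
    rw [hker]
    refine Measure.addHaar_submodule volume _ fun h => hB0 ?_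
    have h2 : Bθ ∈ LinearMap.ker (innerSL ℝ Bθ).toLinearMap := h ▸ Submodule.mem_top
    rw [LinearMap.mem_ker] at h2
    exact inner_self_eq_zero.mp h2
  -- symmetry: the two half-spaces have equal measure
  have hVmeas : MeasurableSet {x : EuclideanSpace ℝ (Fin d) | (inner ℝ x Bθ : ℝ) < 0} :=
    measurableSet_lt hinner.measurable measurable_const
  have hVU : ρ {x : EuclideanSpace ℝ (Fin d) | (inner ℝ x Bθ : ℝ) < 0} = ρ U := by
    have hpre : (Neg.neg ⁻¹' U : Set (EuclideanSpace ℝ (Fin d)))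
        = {x : EuclideanSpace ℝ (Fin d) | (inner ℝ x Bθ : ℝ) < 0} := by
      ext x
      simp [hUdef, inner_neg_left]
    have hkey : ∫⁻ y in U, g y ∂volume = ∫⁻ x in Neg.neg ⁻¹' U, g (-x) ∂volume := by
      conv_lhs => rw [← Measure.map_neg_eq_self (volume : Measure (EuclideanSpace ℝ (Fin d)))]
      exact setLIntegral_map hU hgm measurable_neg
    rw [hpre] at hkey
    rw [hρ, withDensity_apply _ hVmeas, withDensity_apply _ hU, hkey]
    exact lintegral_congr fun x => (hgsymm x).symm
  have hcompl : ρ Uᶜ = ρ U := by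
    have hsub : Uᶜ ⊆ {x : EuclideanSpace ℝ (Fin d) | (inner ℝ x Bθ : ℝ) < 0}
        ∪ {x : EuclideanSpace ℝ (Fin d) | (inner ℝ x Bθ : ℝ) = 0} := by
      intro x hx
      have hx' : (inner ℝ x Bθ : ℝ) ≤ 0 := not_lt.mp hx
      simp only [Set.mem_union, Set.mem_setOf_eq]
      exact hx'.lt_or_eq
    have h1 : ρ Uᶜ ≤ ρ U :=
      calc ρ Uᶜ ≤ ρ ({x : EuclideanSpace ℝ (Fin d) | (inner ℝ x Bθ : ℝ) < 0}
            ∪ {x : EuclideanSpace ℝ (Fin d) | (inner ℝ x Bθ : ℝ) = 0}) := measure_mono hsub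
        _ ≤ ρ {x : EuclideanSpace ℝ (Fin d) | (inner ℝ x Bθ : ℝ) < 0}
            + ρ {x : EuclideanSpace ℝ (Fin d) | (inner ℝ x Bθ : ℝ) = 0} := measure_union_le _ _
        _ = ρ U := by rw [hplane, hVU, add_zero]
    have h2 : ρ U ≤ ρ Uᶜ := by
      rw [← hVU]
      refine measure_mono fun x hx => ?_
      have hx' : (inner ℝ x Bθ : ℝ) < 0 := hx
      simp only [Set.mem_compl_iff, hUdef, Set.mem_setOf_eq, not_lt]
      exact hx'.le
    exact le_antisymm h1 h2
  have hUhalf : ρ U = 2⁻¹ := by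
    have h := measure_add_measure_compl (μ := ρ) hU
    rw [hcompl, measure_univ, ← two_mul] at h
    calc ρ U = 2⁻¹ * (2 * ρ U) := by
          rw [← mul_assoc, ENNReal.inv_mul_cancel (by norm_num) ENNReal.ofNat_ne_top, one_mul]
      _ = 2⁻¹ := by rw [h, mul_one]
  have hUchalf : ρ Uᶜ = 2⁻¹ := hcompl.trans hUhalf
  -- the pushforward identity
  have hmap : ρ.map T = μθ := by
    ext s hs
    rw [Measure.map_apply hTmeas hs, hμθ, Measure.smul_apply, Measure.add_apply,
      Measure.dirac_apply' _ hs, Measure.dirac_apply' _ hs, smul_eq_mul]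
    have hpre : T ⁻¹' s = ((fun _ => Bθ) ⁻¹' s) ∩ U ∪ ((fun _ => -Bθ) ⁻¹' s) \ U := by
      rw [hTeq, Set.piecewise_preimage, Set.ite]
    by_cases h1 : Bθ ∈ s <;> by_cases h2 : -Bθ ∈ s
    · have hTpre : T ⁻¹' s = Set.univ := by
        rw [hpre]
        simp [Set.preimage_const, h1, h2, Set.diff_eq, Set.union_comm]
      rw [hTpre, measure_univ, Set.indicator_of_mem h1, Set.indicator_of_mem h2]
      simp only [Pi.one_apply, one_add_one_eq_two]
      rw [ENNReal.inv_mul_cancel (by norm_num) ENNReal.ofNat_ne_top]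
    · have hTpre : T ⁻¹' s = U := by
        rw [hpre]
        simp [Set.preimage_const, h1, h2]
      rw [hTpre, hUhalf, Set.indicator_of_mem h1, Set.indicator_of_notMem h2]
      simp
    · have hTpre : T ⁻¹' s = Uᶜ := by
        rw [hpre]
        simp [Set.preimage_const, h1, h2, Set.compl_eq_univ_diff]
      rw [hTpre, hUchalf, Set.indicator_of_notMem h1, Set.indicator_of_mem h2]
      simp
    · have hTpre : T ⁻¹' s = ∅ := by
        rw [hpre]
        simp [Set.preimage_const, h1, h2]
      rw [hTpre, measure_empty, Set.indicator_of_notMem h1, Set.indicator_of_notMem h2]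
      simp
  refine ⟨hmap, fun S hSm hSmap => ?_⟩
  have hsm : MeasurableSet ({Bθ, -Bθ} : Set (EuclideanSpace ℝ (Fin d))) :=
    (measurableSet_singleton (-Bθ)).insert Bθ
  have hae : ∀ᵐ x ∂ρ, S x ∈ ({Bθ, -Bθ} : Set (EuclideanSpace ℝ (Fin d))) := by
    have h0 : ρ (S ⁻¹' ({Bθ, -Bθ}ᶜ : Set (EuclideanSpace ℝ (Fin d)))) = 0 := by
      rw [← Measure.map_apply hSm hsm.compl, hSmap, hμθ, Measure.smul_apply,
        Measure.add_apply, Measure.dirac_apply' _ hsm.compl, Measure.dirac_apply' _ hsm.compl]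
      rw [Set.indicator_of_notMem (by simp), Set.indicator_of_notMem (by simp)]
      simp
    rw [ae_iff]
    exact h0
  refine lintegral_mono_ae (hae.mono fun x hx => ?_)
  apply ENNReal.ofReal_le_ofReal
  have key : ∀ y : EuclideanSpace ℝ (Fin d), y = Bθ ∨ y = -Bθ →
      dist x (T x) ^ 2 ≤ dist x y ^ 2 := by
    intro y hy
    rw [hT]
    have hxB := norm_sub_sq_real x Bθ
    have hxB' := norm_sub_sq_real x (-Bθ)
    rw [inner_neg_right, norm_neg] at hxB'
    rcases hy with hy | hy <;> rw [hy]
    · by_cases h : 0 < (inner ℝ x Bθ : ℝ)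
      · rw [if_pos h]
      · rw [if_neg h, dist_eq_norm, dist_eq_norm]
        nlinarith [not_lt.mp h]
    · by_cases h : 0 < (inner ℝ x Bθ : ℝ)
      · rw [if_pos h, dist_eq_norm, dist_eq_norm]
        nlinarith [h]
      · rw [if_neg h]
  exact key (S x) (by simpa using hx)
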